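/- arXiv:1710.04632 — 3 statements merged into one kernel-verified Lean document; each statement's English description precedes it below -/
import Mathlib

section
/- Let (Y, A, X) be a recollement of abelian categories with A AB3. Suppose Λ is a small category such that A admits Λ-colimits, Y has exact Λ-colimits, and i^! : A → Y commutes with Λ-colimits. Then both torsion pairs (C, T) and (T, F) of the associated TTF triple are colim_Λ-exact. -/
open CategoryTheory Limits

universe v u u₁ u₂ u₃

/-- A recollement of categories: adjoint triples `(i^*, i_*, i^!)` and `(j_!, j^*, j_*)`,
with `i_*`, `j_!`, `j_*` fully faithful and the essential image of `i_*` equal to the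
kernel of `j^*`. -/
structure Recollement (Y : Type u₁) (A : Type u₂) (X : Type u₃)
    [Category.{v} Y] [Category.{v} A] [Category.{v} X] where
  /-- `i_* : Y ⥤ A` -/
  iStar : Y ⥤ A
  /-- `i^* : A ⥤ Y` -/
  iUp : A ⥤ Y
  /-- `i^! : A ⥤ Y` -/
  iShriek : A ⥤ Y
  /-- `j^* : A ⥤ X` -/
  jUp : A ⥤ X
  /-- `j_! : X ⥤ A` -/
  jLower : X ⥤ A
  /-- `j_* : X ⥤ A` -/
  jRight : X ⥤ A
  adj_i₁ : iUp ⊣ iStar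
  adj_i₂ : iStar ⊣ iShriek
  adj_j₁ : jLower ⊣ jUp
  adj_j₂ : jUp ⊣ jRight
  iStar_full : iStar.Full
  iStar_faithful : iStar.Faithful
  jLower_full : jLower.Full
  jLower_faithful : jLower.Faithful
  jRight_full : jRight.Full
  jRight_faithful : jRight.Faithful
  essImage_iff : ∀ M : A, iStar.essImage M ↔ IsZero (jUp.obj M)

variable {Y : Type u₁} {A : Type u₂} {X : Type u₃}
  [Category.{v} Y] [Category.{v} A] [Category.{v} X]

/-- The class `C = Ker i^*` of the TTF triple associated to a recollement. -/
def Recollement.C (R : Recollement Y A X) : A → Prop := fun M => IsZero (R.iUp.obj M)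

/-- The class `T = Im i_*` of the TTF triple associated to a recollement. -/
def Recollement.T (R : Recollement Y A X) : A → Prop := fun M => R.iStar.essImage M

/-- The class `F = Ker i^!` of the TTF triple associated to a recollement. -/
def Recollement.F (R : Recollement Y A X) : A → Prop := fun M => IsZero (R.iShriek.obj M)

/-- An (additive) functor between abelian categories is exact if it preserves finite
limits and finite colimits. -/
def IsExactFunctor {C D : Type*} [Category C] [Category D] (G : C ⥤ D) : Prop :=
  Nonempty (PreservesFiniteLimits G) ∧ Nonempty (PreservesFiniteColimits G)

/-- An abelian category has exact `Λ`-colimits if `Λ`-colimits exist and the colimit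
functor `(Λ ⥤ C) ⥤ C` is exact (being a left adjoint it is automatically right exact,
so exactness amounts to preservation of finite limits). -/
structure HasExactColimitsOfShape' (Λ : Type v) [SmallCategory Λ]
    (C : Type u) [Category.{v} C] [Abelian C] : Prop where
  hasColimitsOfShape : HasColimitsOfShape Λ C
  exact' : letI := hasColimitsOfShape
    Nonempty (PreservesFiniteLimits (colim (J := Λ) (C := C)))

/-- An abelian category has exact `Λ`-limits if `Λ`-limits exist and the limit functor
`(Λ ⥤ C) ⥤ C` is exact (being a right adjoint it is automatically left exact, so
exactness amounts to preservation of finite colimits). -/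
structure HasExactLimitsOfShape' (Λ : Type v) [SmallCategory Λ]
    (C : Type u) [Category.{v} C] [Abelian C] : Prop where
  hasLimitsOfShape : HasLimitsOfShape Λ C
  exact' : letI := hasLimitsOfShape
    Nonempty (PreservesFiniteColimits (lim (J := Λ) (C := C)))

/-- A torsion pair `(V, W)` in an abelian category, together with its torsion radical `v`
(with natural monomorphism `η : v ⟶ 𝟭`) and torsion coradical `w`
(with natural epimorphism `π : 𝟭 ⟶ w`), such that `0 ⟶ v M ⟶ M ⟶ w M ⟶ 0` is
short exact for every `M`. -/
structure TorsionPairData (A : Type u) [Category.{v} A] [Abelian A] where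
  V : A → Prop
  W : A → Prop
  V_iso : ∀ {M N : A}, (M ≅ N) → V M → V N
  W_iso : ∀ {M N : A}, (M ≅ N) → W M → W N
  hom_zero : ∀ {M N : A}, V M → W N → ∀ f : M ⟶ N, f = 0
  v : A ⥤ A
  η : v ⟶ 𝟭 A
  w : A ⥤ A
  π : 𝟭 A ⟶ w
  v_mem : ∀ M : A, V (v.obj M)
  w_mem : ∀ M : A, W (w.obj M)
  η_mono : ∀ M : A, Mono (η.app M)
  π_epi : ∀ M : A, Epi (π.app M)
  comp_zero : ∀ M : A, η.app M ≫ π.app M = 0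
  exact_mid : ∀ M : A, (ShortComplex.mk (η.app M) (π.app M) (comp_zero M)).Exact

/-- A torsion pair is `colim_Λ`-exact if for every `Λ`-diagram `(X_λ)` the canonical map
`colim v(X_λ) ⟶ colim X_λ` induced by the torsion radical monomorphisms is a
monomorphism. -/
def TorsionPairData.ColimExact {A : Type u} [Category.{v} A] [Abelian A]
    (P : TorsionPairData A) (Λ : Type v) [SmallCategory Λ]
    [HasColimitsOfShape Λ A] : Prop :=
  ∀ D : Λ ⥤ A, Mono (colimMap (Functor.whiskerLeft D P.η ≫ D.rightUnitor.hom))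

/-!
A morphism of `A` is mono as soon as `i^!` and `j^*` send it to monomorphisms: its kernel is
then killed by `j^*`, so lies in `Im i_*`, where it is recovered by `i^!`. For any torsion pair,
`i^!` of the comparison map `colim v(D λ) ⟶ colim D λ` is mono because `i^!` commutes with
`Λ`-colimits and `Λ`-colimits in `Y` are exact. The functor `j^*` is a left adjoint killing `T`:
for `(C, T)` it inverts every `η`, whose cokernel lies in `T`, and for `(T, F)` it kills
`colim v(D λ)`.
-/

section PreservesColimits

variable {J : Type*} [Category J] {C : Type*} {D : Type*} [Category C] [Category D]
  [HasColimitsOfShape J C] (G : C ⥤ D) [PreservesColimitsOfShape J G]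

lemma isZero_map_colimit [HasZeroMorphisms D] (F : J ⥤ C) (h : ∀ j, IsZero (G.obj (F.obj j))) :
    IsZero (G.obj (colimit F)) :=
  (IsZero.iff_id_eq_zero _).2 <|
    (isColimitOfPreserves G (colimit.isColimit F)).hom_ext fun j => (h j).eq_of_src _ _

variable {F₁ F₂ : J ⥤ C} (α : F₁ ⟶ F₂)

lemma isIso_map_colimMap_of_isIso_map_app (h : ∀ j, IsIso (G.map (α.app j))) :
    IsIso (G.map (colimMap α)) := by
  have : ∀ j, IsIso ((Functor.whiskerRight α G).app j) := h
  have : IsIso (Functor.whiskerRight α G) := NatIso.isIso_of_isIso_app _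
  have t₁ := isColimitOfPreserves G (colimit.isColimit F₁)
  have t₂ := isColimitOfPreserves G (colimit.isColimit F₂)
  have : G.map (colimMap α) =
      (t₁.coconePointsIsoOfNatIso t₂ (asIso (Functor.whiskerRight α G))).hom :=
    t₁.hom_ext fun j => by
      rw [IsColimit.comp_coconePointsIsoOfNatIso_hom]
      dsimp
      rw [← G.map_comp, ι_colimMap, G.map_comp]
  rw [this]
  infer_instance

lemma mono_map_colimMap_of_mono_map_app [Abelian D] [HasColimitsOfShape J D]
    [PreservesFiniteLimits (colim (J := J) (C := D))] (h : ∀ j, Mono (G.map (α.app j))) :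
    Mono (G.map (colimMap α)) := by
  have : ∀ j, Mono ((Functor.whiskerRight α G).app j) := h
  have : Mono (Functor.whiskerRight α G) := NatTrans.mono_of_mono_app _
  exact ((MorphismProperty.monomorphisms D).arrow_mk_iso_iff
    (Arrow.isoOfNatIso (preservesColimitNatIso G) (Arrow.mk α))).2
    (colim.map_mono (Functor.whiskerRight α G))

end PreservesColimits

namespace TorsionPairData

variable {A : Type u} [Category.{v} A] [Abelian A] (P : TorsionPairData A)

lemma isIso_map_η_app {B : Type*} [Category B] [HasZeroMorphisms B] (G : A ⥤ B)
    [G.PreservesZeroMorphisms] [PreservesFiniteLimits G] (M : A)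
    (h : IsZero (G.obj (P.w.obj M))) : IsIso (G.map (P.η.app M)) := by
  have := P.η_mono M
  exact KernelFork.IsLimit.isIso_ι _ (KernelFork.mapIsLimit _ (P.exact_mid M).fIsKernel G)
    (h.eq_of_tgt _ _)

end TorsionPairData

namespace Recollement

variable (R : Recollement Y A X)

instance : R.iStar.IsLeftAdjoint := R.adj_i₂.isLeftAdjoint

instance : R.iShriek.IsRightAdjoint := R.adj_i₂.isRightAdjoint

instance : R.jUp.IsLeftAdjoint := R.adj_j₂.isLeftAdjoint

instance : R.jUp.IsRightAdjoint := R.adj_j₁.isRightAdjoint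

section

variable [Abelian A] [Abelian X] {Λ : Type v} [SmallCategory Λ] [HasColimitsOfShape Λ A]
  (P : TorsionPairData A) (D : Λ ⥤ A)

lemma isIso_jUp_map_colimMap_of_W_eq_T (hW : P.W = R.T) :
    IsIso (R.jUp.map (colimMap (Functor.whiskerLeft D P.η ≫ D.rightUnitor.hom))) :=
  isIso_map_colimMap_of_isIso_map_app R.jUp _ fun j => by
    simpa using P.isIso_map_η_app R.jUp (D.obj j) <|
      (R.essImage_iff _).1 (hW ▸ P.w_mem (D.obj j) : R.T _)

lemma isZero_jUp_obj_colimit_of_V_eq_T (hV : P.V = R.T) :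
    IsZero (R.jUp.obj (colimit (D ⋙ P.v))) :=
  isZero_map_colimit R.jUp _ fun j => (R.essImage_iff _).1 (hV ▸ P.v_mem (D.obj j) : R.T _)

end

variable [Abelian Y] [Abelian A]

lemma isZero_of_isZero_iShriek_obj_of_isZero_jUp_obj {M : A}
    (hi : IsZero (R.iShriek.obj M)) (hj : IsZero (R.jUp.obj M)) : IsZero M := by
  obtain ⟨N, ⟨e⟩⟩ := (R.essImage_iff M).2 hj
  have := R.iStar_full
  have := R.iStar_faithful
  have hN : IsZero N := (hi.of_iso (R.iShriek.mapIso e)).of_iso (asIso (R.adj_i₂.unit.app N))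
  exact (R.iStar.map_isZero hN).of_iso e.symm

variable [Abelian X]

lemma mono_of_mono_map_iShriek_of_mono_map_jUp {M N : A} (f : M ⟶ N)
    (hi : Mono (R.iShriek.map f)) (hj : Mono (R.jUp.map f)) : Mono f :=
  Preadditive.mono_of_isZero_kernel f <| R.isZero_of_isZero_iShriek_obj_of_isZero_jUp_obj
    ((isZero_kernel_of_mono _).of_iso (PreservesKernel.iso R.iShriek f))
    ((isZero_kernel_of_mono _).of_iso (PreservesKernel.iso R.jUp f))

lemma colimExact_of_mono_jUp_map {Λ : Type v} [SmallCategory Λ] [HasColimitsOfShape Λ A]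
    [HasColimitsOfShape Λ Y] [PreservesFiniteLimits (colim (J := Λ) (C := Y))]
    [PreservesColimitsOfShape Λ R.iShriek] (P : TorsionPairData A)
    (h : ∀ D : Λ ⥤ A,
      Mono (R.jUp.map (colimMap (Functor.whiskerLeft D P.η ≫ D.rightUnitor.hom)))) :
    P.ColimExact Λ := fun D =>
  R.mono_of_mono_map_iShriek_of_mono_map_jUp _
    (mono_map_colimMap_of_mono_map_app R.iShriek _ fun j => by
      have := P.η_mono (D.obj j)
      simpa using R.iShriek.map_mono (P.η.app (D.obj j)))
    (h D)

end Recollement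

theorem recollement_colimExact_of_iShriek_preserves_general [Abelian Y] [Abelian A] [Abelian X]
    (R : Recollement Y A X)
    (Λ : Type v) [SmallCategory Λ] [HasColimitsOfShape Λ A]
    (hY : HasExactColimitsOfShape' Λ Y)
    (hi : Nonempty (PreservesColimitsOfShape Λ R.iShriek))
    (P₁ P₂ : TorsionPairData A)
    (hP₁W : P₁.W = R.T) (hP₂V : P₂.V = R.T) :
    P₁.ColimExact Λ ∧ P₂.ColimExact Λ := by
  have := hY.hasColimitsOfShape
  obtain ⟨_⟩ := hY.exact'
  obtain ⟨_⟩ := hi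
  exact ⟨R.colimExact_of_mono_jUp_map P₁ fun D =>
      have := R.isIso_jUp_map_colimMap_of_W_eq_T P₁ D hP₁W
      inferInstance,
    R.colimExact_of_mono_jUp_map P₂ fun D =>
      mono_of_source_iso_zero _ (R.isZero_jUp_obj_colimit_of_V_eq_T P₂ D hP₂V).isoZero⟩

/-- Let `(Y, A, X)` be a recollement of abelian categories with `A` AB3 admitting
`Λ`-colimits, `Y` having exact `Λ`-colimits and `i^!` commuting with `Λ`-colimits. Then
both torsion pairs `(C, T)` and `(T, F)` of the associated TTF triple are
`colim_Λ`-exact. -/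
theorem recollement_colimExact_of_iShriek_preserves [Abelian Y] [Abelian A] [Abelian X]
    (R : Recollement Y A X) [HasCoproducts.{v} A]
    (Λ : Type v) [SmallCategory Λ] [HasColimitsOfShape Λ A]
    (hY : HasExactColimitsOfShape' Λ Y)
    (hi : Nonempty (PreservesColimitsOfShape Λ R.iShriek))
    (P₁ P₂ : TorsionPairData A)
    (hP₁V : P₁.V = R.C) (hP₁W : P₁.W = R.T) (hP₂V : P₂.V = R.T) (hP₂W : P₂.W = R.F) :
    P₁.ColimExact Λ ∧ P₂.ColimExact Λ :=
  recollement_colimExact_of_iShriek_preserves_general R Λ hY hi P₁ P₂ hP₁W hP₂V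
end

section
/- Let (Y, A, X) be a recollement of abelian categories with A AB3 (cocomplete). If either i^! commutes with direct limits or i^* is exact, then A is AB5 if and only if X and Y are AB5. -/
/-
Exactness of direct limits passes from `A` to `X` because `X` is a reflective subcategory
of `A` (via `j_*`) with left exact reflector `j^*`, and to `Y` because `i_* : Y ⥤ A` is fully
faithful, left exact and commutes with colimits.

Conversely, direct limits in the abelian category `A` are exact as soon as they preserve
monomorphisms. The functors `j^*` and `i^!` (or `i^*`, when it is exact) are left exact, commute
with direct limits and jointly detect zero objects: an object killed by `j^*` lies in the image
of `i_*`, on which `i^!` and `i^*` restrict to the identity. Applied to kernels, they jointly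
detect monomorphisms, and the monomorphism property of direct limits in `X` and `Y` lifts to `A`.
-/

open CategoryTheory Limits

universe v u u₁ u₂ u₃

variable {Y : Type u₁} {A : Type u₂} {X : Type u₃}
  [Category.{v} Y] [Category.{v} A] [Category.{v} X]

/-- An abelian category is AB5 if it is cocomplete (AB3) and direct limits over any
directed set are exact. -/
structure IsAB5 (C : Type u) [Category.{v} C] [Abelian C] : Prop where
  hasColimits : HasColimits C
  exactDirected : ∀ (Λ : Type v) [Preorder Λ] [IsDirected Λ (· ≤ ·)] [Nonempty Λ],
    letI := hasColimits
    Nonempty (PreservesFiniteLimits (colim (J := Λ) (C := C)))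

namespace IsAB5

variable {C : Type u} [Category.{v} C] [Abelian C]

lemma hasExactColimitsOfShape (hC : IsAB5 C) (Λ : Type v) [Preorder Λ]
    [IsDirected Λ (· ≤ ·)] [Nonempty Λ] :
    letI := hC.hasColimits
    HasExactColimitsOfShape Λ C :=
  letI := hC.hasColimits
  ⟨(hC.exactDirected Λ).some⟩

lemma of_hasExactColimitsOfShape [HasColimits C]
    (h : ∀ (Λ : Type v) [Preorder Λ] [IsDirected Λ (· ≤ ·)] [Nonempty Λ],
      HasExactColimitsOfShape Λ C) :
    IsAB5 C :=
  ⟨inferInstance, fun Λ _ _ _ => ⟨(h Λ).preservesFiniteLimits⟩⟩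

end IsAB5

section JointlyConservative

variable {C D E : Type*} [Category* C] [Category* D] [Category* E]
  [Abelian C] [Abelian D] [Abelian E]
  (F : C ⥤ D) (G : C ⥤ E) [PreservesFiniteLimits F] [PreservesFiniteLimits G]

lemma mono_of_mono_map_of_mono_map
    (hFG : ∀ M : C, IsZero (F.obj M) → IsZero (G.obj M) → IsZero M)
    {M N : C} (f : M ⟶ N) [Mono (F.map f)] [Mono (G.map f)] : Mono f := by
  apply Preadditive.mono_of_isZero_kernel
  apply hFG
  · exact (isZero_zero D).of_iso (PreservesKernel.iso F f ≪≫ kernel.ofMono _)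
  · exact (isZero_zero E).of_iso (PreservesKernel.iso G f ≪≫ kernel.ofMono _)

lemma mono_map_colim_map {J : Type*} [Category* J] [HasColimitsOfShape J C]
    [HasColimitsOfShape J D] [HasExactColimitsOfShape J D] [PreservesColimitsOfShape J F]
    {K L : J ⥤ C} (f : K ⟶ L) [Mono f] : Mono (F.map (colim.map f)) := by
  have : Functor.PreservesMonomorphisms (colim ⋙ F) :=
    .of_iso (preservesColimitNatIso (J := J) F).symm
  exact (colim ⋙ F).map_mono f

lemma CategoryTheory.HasExactColimitsOfShape.of_jointly_reflect_isZero {J : Type*} [Category* J]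
    [HasColimitsOfShape J C] [HasColimitsOfShape J D] [HasColimitsOfShape J E]
    [HasExactColimitsOfShape J D] [HasExactColimitsOfShape J E]
    [PreservesColimitsOfShape J F] [PreservesColimitsOfShape J G]
    (hFG : ∀ M : C, IsZero (F.obj M) → IsZero (G.obj M) → IsZero M) :
    HasExactColimitsOfShape J C := by
  have : Functor.PreservesMonomorphisms (colim (J := J) (C := C)) :=
    ⟨fun f _ => by
      have := mono_map_colim_map F f
      have := mono_map_colim_map G f
      exact mono_of_mono_map_of_mono_map F G hFG _⟩
  exact hasExactColimitsOfShape_of_preservesMono C J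

end JointlyConservative

namespace Recollement

section ZeroObjects

variable [HasZeroMorphisms Y] [HasZeroMorphisms A] (R : Recollement Y A X)

lemma isZero_of_isZero_jUp_of_isZero_obj {F : A ⥤ Y} (e : R.iStar ⋙ F ≅ 𝟭 Y) {M : A}
    (hj : IsZero (R.jUp.obj M)) (hF : IsZero (F.obj M)) : IsZero M := by
  obtain ⟨N, ⟨eN⟩⟩ := (R.essImage_iff M).2 hj
  have hN : IsZero N := hF.of_iso (e.symm.app N ≪≫ F.mapIso eN)
  have := R.adj_i₂.isLeftAdjoint
  exact (R.iStar.map_isZero hN).of_iso eN.symm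

lemma isZero_of_isZero_jUp_of_isZero_iShriek {M : A} (hj : IsZero (R.jUp.obj M))
    (hi : IsZero (R.iShriek.obj M)) : IsZero M :=
  have := R.iStar_full
  have := R.iStar_faithful
  R.isZero_of_isZero_jUp_of_isZero_obj (asIso R.adj_i₂.unit).symm hj hi

lemma isZero_of_isZero_jUp_of_isZero_iUp {M : A} (hj : IsZero (R.jUp.obj M))
    (hi : IsZero (R.iUp.obj M)) : IsZero M :=
  have := R.iStar_full
  have := R.iStar_faithful
  R.isZero_of_isZero_jUp_of_isZero_obj (asIso R.adj_i₁.counit) hj hi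

end ZeroObjects

lemma isAB5_right [Abelian A] [Abelian X] (R : Recollement Y A X) (hA : IsAB5 A) : IsAB5 X := by
  have := hA.hasColimits
  have := R.jRight_full
  have := R.jRight_faithful
  have : Reflective R.jRight := { L := R.jUp, adj := R.adj_j₂ }
  have : HasColimits X := hasColimits_of_reflective R.jRight
  have : PreservesLimitsOfSize.{0, 0} R.jUp := R.adj_j₁.rightAdjoint_preservesLimits
  refine .of_hasExactColimitsOfShape fun Λ _ _ _ => ?_
  have := hA.hasExactColimitsOfShape Λ
  exact R.adj_j₂.hasExactColimitsOfShape Λ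

lemma isAB5_left [Abelian Y] [Abelian A] (R : Recollement Y A X) (hA : IsAB5 A) : IsAB5 Y := by
  have := hA.hasColimits
  have := R.iStar_full
  have := R.iStar_faithful
  have : Reflective R.iStar := { L := R.iUp, adj := R.adj_i₁ }
  have : HasColimits Y := hasColimits_of_reflective R.iStar
  have : PreservesLimitsOfSize.{0, 0} R.iStar := R.adj_i₁.rightAdjoint_preservesLimits
  have : PreservesColimits R.iStar := R.adj_i₂.leftAdjoint_preservesColimits
  refine .of_hasExactColimitsOfShape fun Λ _ _ _ => ?_
  have := hA.hasExactColimitsOfShape Λ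
  exact HasExactColimitsOfShape.domain_of_functor Λ R.iStar

end Recollement

/-- Let `(Y, A, X)` be a recollement of abelian categories with `A` AB3. If `i^!`
commutes with direct limits or `i^*` is exact, then `A` is AB5 iff `X` and `Y` are
AB5. -/
theorem recollement_isAB5_iff [Abelian Y] [Abelian A] [Abelian X]
    (R : Recollement Y A X) [HasCoproducts.{v} A]
    (h : (∀ (Λ : Type v) [Preorder Λ] [IsDirected Λ (· ≤ ·)] [Nonempty Λ],
            Nonempty (PreservesColimitsOfShape Λ R.iShriek)) ∨ IsExactFunctor R.iUp) :
    IsAB5 A ↔ (IsAB5 X ∧ IsAB5 Y) := by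
  refine ⟨fun hA => ⟨R.isAB5_right hA, R.isAB5_left hA⟩, fun ⟨hX, hY⟩ => ?_⟩
  have : HasColimits A := has_colimits_of_hasCoequalizers_and_coproducts
  refine .of_hasExactColimitsOfShape fun Λ _ _ _ => ?_
  have := hX.hasColimits
  have := hY.hasColimits
  have := hX.hasExactColimitsOfShape Λ
  have := hY.hasExactColimitsOfShape Λ
  have : PreservesLimitsOfSize.{0, 0} R.jUp := R.adj_j₁.rightAdjoint_preservesLimits
  have : PreservesColimits R.jUp := R.adj_j₂.leftAdjoint_preservesColimits
  rcases h with hShriek | ⟨⟨_⟩, -⟩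
  · have := (hShriek Λ).some
    have : PreservesLimitsOfSize.{0, 0} R.iShriek := R.adj_i₂.rightAdjoint_preservesLimits
    exact .of_jointly_reflect_isZero R.jUp R.iShriek
      fun _ => R.isZero_of_isZero_jUp_of_isZero_iShriek
  · have : PreservesColimits R.iUp := R.adj_i₁.leftAdjoint_preservesColimits
    exact .of_jointly_reflect_isZero R.jUp R.iUp fun _ => R.isZero_of_isZero_jUp_of_isZero_iUp
end

section
/- Let (Y, A, X) be a recollement of abelian categories where A is AB3* and AB4, and assume that for every set-indexed family of objects in A the canonical morphism from the coproduct to the product is a monomorphism. Then i^! : A → Y commutes with coproducts. -/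
open CategoryTheory Limits

universe v u u₁ u₂ u₃

variable {Y : Type u₁} {A : Type u₂} {X : Type u₃}
  [Category.{v} Y] [Category.{v} A] [Category.{v} X]

/-- The canonical morphism from a coproduct to the product of the same family. -/
noncomputable def coprodToProd {C : Type u} [Category.{v} C] [Abelian C]
    [HasCoproducts.{v} C] [HasProducts.{v} C] {I : Type v} (f : I → C) :
    (∐ f) ⟶ ∏ᶜ f :=
  letI : DecidableEq I := Classical.decEq I
  Sigma.desc fun i => Pi.lift fun j =>
    if h : i = j then eqToHom (congrArg f h) else 0

/-!
The counit `ε_M : i_* i^! M ⟶ M` is a monomorphism whose cokernel receives no nonzero map from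
`Im i_*`: its kernel, and the pullback of `M ⟶ coker ε_M` along such a map, are killed by `j^*`,
so they lie in `Im i_*` and hence map to `M` through `ε_M`. By AB4, `∐ ε_{M_k}` is the kernel of
`∐ M_k ⟶ ∐ coker ε_{M_k}`, and `ε_{∐ M_k}` factors through it because a coproduct of objects
receiving no nonzero map from `Im i_*` embeds into their product. So `∐ i_* i^! M_k` and
`i_* i^! (∐ M_k)` are the same subobject of `∐ M_k`, and since `i_*` is fully faithful, `i^!`
preserves the coproduct.
-/

namespace CategoryTheory

lemma Adjunction.comp_eq_zero_of_counit_comp_eq_zero {C D : Type*} [Category C] [Category D]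
    [HasZeroMorphisms D] {L : C ⥤ D} {G : D ⥤ C} (adj : L ⊣ G) {V : C} {M N : D}
    (g : L.obj V ⟶ M) {h : M ⟶ N} (hh : adj.counit.app M ≫ h = 0) : g ≫ h = 0 := by
  rw [← (adj.homEquiv V M).symm_apply_apply g, adj.homEquiv_counit, Category.assoc, hh,
    comp_zero]

lemma Adjunction.eq_zero_of_comp_counit_eq_zero {C D : Type*} [Category C] [Category D]
    [HasZeroMorphisms C] [HasZeroMorphisms D] {L : C ⥤ D} {G : D ⥤ C} (adj : L ⊣ G)
    [L.Full] [L.PreservesZeroMorphisms] {V : C} {M : D} (g : L.obj V ⟶ L.obj (G.obj M))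
    (hg : g ≫ adj.counit.app M = 0) : g = 0 := by
  obtain ⟨h, rfl⟩ := L.map_surjective g
  have : h = 0 := (adj.homEquiv V M).symm.injective (by
    rw [adj.homEquiv_counit, hg, adj.homEquiv_counit, L.map_zero, zero_comp])
  rw [this, L.map_zero]

lemma isIso_of_comp_eq_of_comp_eq {C : Type*} [Category C] {P Q Z : C} {a : P ⟶ Q}
    {e : Q ⟶ Z} {m : P ⟶ Z} [Mono e] [Mono m] (ha : a ≫ e = m) {b : Q ⟶ P}
    (hb : b ≫ m = e) : IsIso a :=
  ⟨b, by rw [← cancel_mono m, Category.assoc, hb, ha, Category.id_comp],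
    by rw [← cancel_mono e, Category.assoc, ha, hb, Category.id_comp]⟩

lemma isIso_map_cokernel_π_of_isZero {C D : Type*} [Category C] [Category D]
    [HasZeroMorphisms C] [HasZeroMorphisms D] (G : C ⥤ D) [G.PreservesZeroMorphisms]
    {P Q : C} (f : P ⟶ Q) [HasCokernel f] [HasCokernel (G.map f)]
    [PreservesColimit (parallelPair f 0) G] (hP : IsZero (G.obj P)) :
    IsIso (G.map (cokernel.π f)) := by
  have := cokernel.π_of_zero (hP.eq_of_src (G.map f) 0)
  have : IsIso (G.map (cokernel.π f) ≫ (PreservesCokernel.iso G f).hom) := by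
    rw [PreservesCokernel.π_iso_hom]; infer_instance
  exact IsIso.of_isIso_comp_right _ (PreservesCokernel.iso G f).hom

lemma Adjunction.sigmaComparison_comp_counit_app {C D : Type*} [Category C] [Category D]
    {L : C ⥤ D} {G : D ⥤ C} (adj : L ⊣ G) {I : Type*} [HasCoproductsOfShape I D] (f : I → D) :
    sigmaComparison (G ⋙ L) f ≫ adj.counit.app (∐ f) =
      Limits.Sigma.map fun i ↦ adj.counit.app (f i) := by
  ext j
  rw [ι_comp_sigmaComparison_assoc, Sigma.ι_map]
  exact adj.counit.naturality _

end CategoryTheory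

namespace CategoryTheory.Limits

lemma eq_zero_of_mono_coprodToProd {C : Type u} [Category.{v} C] [Abelian C]
    [HasCoproducts.{v} C] [HasProducts.{v} C] {I : Type v} {f : I → C} [Mono (coprodToProd f)]
    {S : C} (h : ∀ i (g : S ⟶ f i), g = 0) (g : S ⟶ ∐ f) : g = 0 := by
  rw [← cancel_mono (coprodToProd f), zero_comp]
  ext j
  simp [h]

noncomputable def isLimitKernelForkSigmaMap {C : Type*} [Category C] [HasZeroMorphisms C]
    {I : Type*} [HasColimitsOfShape (Discrete I) C]
    [PreservesFiniteLimits (colim (J := Discrete I) (C := C))] {P Q S : I → C}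
    (ι : ∀ i, P i ⟶ Q i) (π : ∀ i, Q i ⟶ S i) (w : ∀ i, ι i ≫ π i = 0)
    (hι : ∀ i, IsLimit (KernelFork.ofι (ι i) (w i))) :
    IsLimit (KernelFork.ofι (Sigma.map ι)
      (show Sigma.map ι ≫ Sigma.map π = 0 by ext; simp [reassoc_of% w])) := by
  let φ : Discrete.functor P ⟶ Discrete.functor Q := Discrete.natTrans fun i ↦ ι i.as
  let ψ : Discrete.functor Q ⟶ Discrete.functor S := Discrete.natTrans fun i ↦ π i.as
  have hφψ : φ ≫ ψ = 0 := by ext i; exact w i.as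
  have hφ : IsLimit (KernelFork.ofι φ hφψ) :=
    evaluationJointlyReflectsLimits _ fun i ↦
      (isLimitMapConeForkEquiv' ((evaluation _ C).obj i) hφψ).symm (hι i.as)
  exact isLimitForkMapOfIsLimit' colim hφψ hφ

end CategoryTheory.Limits

namespace Recollement

variable (R : Recollement Y A X)

lemma isZero_jUp_obj_iStar_obj (W : Y) : IsZero (R.jUp.obj (R.iStar.obj W)) :=
  (R.essImage_iff _).1 (R.iStar.obj_mem_essImage W)

lemma essImage_iStar_of_mono [HasZeroMorphisms X] {K : A} {W : Y} (m : K ⟶ R.iStar.obj W) [Mono m] :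
    R.iStar.essImage K :=
  have := R.adj_j₁.isRightAdjoint
  (R.essImage_iff K).2 (IsZero.of_mono (R.jUp.map m) (R.isZero_jUp_obj_iStar_obj W))

variable [Abelian A] [Abelian X]

instance mono_counit_app [Abelian Y] (M : A) : Mono (R.adj_i₂.counit.app M) := by
  have := R.iStar_full
  obtain ⟨V, ⟨e⟩⟩ := R.essImage_iStar_of_mono (kernel.ι (R.adj_i₂.counit.app M))
  have : e.hom ≫ kernel.ι _ = 0 :=
    R.adj_i₂.eq_zero_of_comp_counit_eq_zero _ (by rw [Category.assoc, kernel.condition, comp_zero])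
  exact Abelian.mono_of_kernel_ι_eq_zero _ ((cancel_epi e.hom).1 (this.trans comp_zero.symm))

lemma isIso_jUp_map_cokernel_π_counit_app (M : A) :
    IsIso (R.jUp.map (cokernel.π (R.adj_i₂.counit.app M))) :=
  have := R.adj_j₂.isLeftAdjoint
  isIso_map_cokernel_π_of_isZero R.jUp _ (R.isZero_jUp_obj_iStar_obj _)

lemma hom_iStar_obj_cokernel_counit_app_eq_zero {M : A} {W : Y}
    (g : R.iStar.obj W ⟶ cokernel (R.adj_i₂.counit.app M)) : g = 0 := by
  set π := cokernel.π (R.adj_i₂.counit.app M)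
  have := R.adj_j₁.isRightAdjoint
  have := R.isIso_jUp_map_cokernel_π_counit_app M
  have : IsIso (R.jUp.map (pullback.snd π g)) :=
    ((IsPullback.of_hasPullback π g).map R.jUp).isIso_snd_of_isIso
  obtain ⟨V, ⟨e⟩⟩ : R.iStar.essImage (pullback π g) :=
    (R.essImage_iff _).2
      ((R.isZero_jUp_obj_iStar_obj W).of_iso (asIso (R.jUp.map (pullback.snd π g))))
  have hfst : pullback.fst π g ≫ π = 0 := (cancel_epi e.hom).1 (by
    rw [comp_zero, ← Category.assoc]
    exact R.adj_i₂.comp_eq_zero_of_counit_comp_eq_zero _ (cokernel.condition _))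
  rw [← cancel_epi (pullback.snd π g), ← pullback.condition, hfst, comp_zero]

lemma isIso_sigmaComparison_iShriek_comp_iStar [Abelian Y] [HasCoproducts.{v} A]
    [HasProducts.{v} A] {I : Type v} [PreservesFiniteLimits (colim (J := Discrete I) (C := A))]
    (f : I → A) [Mono (coprodToProd fun i ↦ cokernel (R.adj_i₂.counit.app (f i)))] :
    IsIso (sigmaComparison (R.iShriek ⋙ R.iStar) f) := by
  let ε := R.adj_i₂.counit
  let hker := isLimitKernelForkSigmaMap (fun i ↦ ε.app (f i)) (fun i ↦ cokernel.π (ε.app (f i)))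
    (fun i ↦ cokernel.condition _)
    fun i ↦ Abelian.monoIsKernelOfCokernel (CokernelCofork.ofπ _ (cokernel.condition _))
      (cokernelIsCokernel (ε.app (f i)))
  have := mono_of_isLimit_fork hker
  obtain ⟨v, hv⟩ := KernelFork.IsLimit.lift' hker (ε.app (∐ f))
    (eq_zero_of_mono_coprodToProd (fun _ g ↦ R.hom_iStar_obj_cokernel_counit_app_eq_zero g) _)
  exact isIso_of_comp_eq_of_comp_eq (R.adj_i₂.sigmaComparison_comp_counit_app f) hv

end Recollement

/-- Let `(Y, A, X)` be a recollement of abelian categories with `A` AB3* and AB4 such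
that every canonical morphism from a coproduct to the corresponding product is a
monomorphism. Then `i^!` commutes with coproducts. -/
theorem recollement_iShriek_preservesCoproducts [Abelian Y] [Abelian A] [Abelian X]
    (R : Recollement Y A X) [HasProducts.{v} A] [HasCoproducts.{v} A]
    (hAB4 : ∀ I : Type v,
      Nonempty (PreservesFiniteLimits (colim (J := Discrete I) (C := A))))
    (hmono : ∀ (I : Type v) (f : I → A), Mono (coprodToProd f)) :
    ∀ I : Type v, Nonempty (PreservesColimitsOfShape (Discrete I) R.iShriek) := by
  intro I
  obtain ⟨_⟩ := hAB4 I
  have := R.iStar_full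
  have := R.iStar_faithful
  have (f : I → A) : PreservesColimit (Discrete.functor f) (R.iShriek ⋙ R.iStar) :=
    have := hmono I fun i ↦ cokernel (R.adj_i₂.counit.app (f i))
    have := R.isIso_sigmaComparison_iShriek_comp_iStar f
    PreservesCoproduct.of_iso_comparison _ f
  have := preservesColimitsOfShape_of_discrete (J := I) (R.iShriek ⋙ R.iStar)
  exact ⟨preservesColimitsOfShape_of_reflects_of_preserves R.iShriek R.iStar⟩
end
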